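/- arXiv:1101.5308 — 3 statements merged into one kernel-verified Lean document; each statement's English description precedes it below -/
import Mathlib

section
/- If a bounded convex region S of the plane of Euclidean diameter D(S) admits a cover by grid cells of side length ℓ (each cell intersecting S in area at least γℓ² for a constant γ > 0), and ℓ ≤ D(S), then the cell-diameter D_□(S) of the cover satisfies D_□(S) ≤ c·D(S)/ℓ for some absolute constant c, where cell-distance is the length of a shortest path of pairwise adjacent cells of the cover (cells adjacent if they touch by side or corner). -/
open MeasureTheory

/-- The closed axis-parallel grid cell of side `ℓ` with index `p ∈ ℤ²`. -/
def gridCell (ℓ : ℝ) (p : ℤ × ℤ) : Set (EuclideanSpace ℝ (Fin 2)) :=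
  {x | (p.1 : ℝ) * ℓ ≤ x 0 ∧ x 0 ≤ ((p.1 : ℝ) + 1) * ℓ ∧
       (p.2 : ℝ) * ℓ ≤ x 1 ∧ x 1 ≤ ((p.2 : ℝ) + 1) * ℓ}

/-- Two grid cells are adjacent (touch by side or corner) iff their indices are at
Chebyshev distance at most 1. -/
def cellAdj (p q : ℤ × ℤ) : Prop :=
  max (p.1 - q.1).natAbs (p.2 - q.2).natAbs ≤ 1

/-!
The volume condition forces every cell of the cover to meet `S`, so cells `p` and `q` contain
points `x` and `y` of `S`. Cut the segment `[x, y]`, which has length at most `D(S)`, into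
`k ≤ 2 D(S) / ℓ` pieces of length `< ℓ`. By convexity the subdivision points lie in `S`, hence
in cells of the cover, and two points at distance `< ℓ` lie in cells whose indices differ by at
most one in each coordinate.
-/

open Set

lemma natAbs_sub_le_one_of_dist_lt {ℓ u v : ℝ} {a b : ℤ}
    (hu : u ∈ Icc (a * ℓ) ((a + 1) * ℓ)) (hv : v ∈ Icc (b * ℓ) ((b + 1) * ℓ))
    (h : dist u v < ℓ) : (a - b).natAbs ≤ 1 := by
  have hℓ : 0 < ℓ := dist_nonneg.trans_lt h
  rw [Real.dist_eq, abs_lt] at h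
  have hab : ((a - b : ℤ) : ℝ) * ℓ < 2 * ℓ := by push_cast; linarith [hu.1, hv.2]
  have hba : ((b - a : ℤ) : ℝ) * ℓ < 2 * ℓ := by push_cast; linarith [hu.2, hv.1]
  have hab' : a - b < 2 := by exact_mod_cast lt_of_mul_lt_mul_right hab hℓ.le
  have hba' : b - a < 2 := by exact_mod_cast lt_of_mul_lt_mul_right hba hℓ.le
  omega

lemma cellAdj_of_dist_lt {ℓ : ℝ} {z w : EuclideanSpace ℝ (Fin 2)} {p q : ℤ × ℤ}
    (hz : z ∈ gridCell ℓ p) (hw : w ∈ gridCell ℓ q) (h : dist z w < ℓ) : cellAdj p q :=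
  max_le
    (natAbs_sub_le_one_of_dist_lt ⟨hz.1, hz.2.1⟩ ⟨hw.1, hw.2.1⟩
      ((PiLp.dist_apply_le z w 0).trans_lt h))
    (natAbs_sub_le_one_of_dist_lt ⟨hz.2.2.1, hz.2.2.2⟩ ⟨hw.2.2.1, hw.2.2.2⟩
      ((PiLp.dist_apply_le z w 1).trans_lt h))

lemma exists_cellAdj_chain {ℓ : ℝ} {𝒞 : Set (ℤ × ℤ)} {p q : ℤ × ℤ} {k : ℕ} (hk : 0 < k)
    (z : ℕ → EuclideanSpace ℝ (Fin 2)) (hcov : ∀ i ≤ k, ∃ r ∈ 𝒞, z i ∈ gridCell ℓ r)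
    (hstep : ∀ i < k, dist (z i) (z (i + 1)) < ℓ)
    (hp : p ∈ 𝒞) (hzp : z 0 ∈ gridCell ℓ p) (hq : q ∈ 𝒞) (hzq : z k ∈ gridCell ℓ q) :
    ∃ f : ℕ → ℤ × ℤ, f 0 = p ∧ f k = q ∧ (∀ i ≤ k, f i ∈ 𝒞) ∧
      ∀ i < k, cellAdj (f i) (f (i + 1)) := by
  choose! g hg𝒞 hgz using hcov
  let f : ℕ → ℤ × ℤ := fun i => if i = 0 then p else if i = k then q else g i
  have hf : ∀ i ≤ k, f i ∈ 𝒞 ∧ z i ∈ gridCell ℓ (f i) := by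
    intro i hi
    simp only [f]
    split_ifs with h0 hk'
    · exact ⟨hp, h0 ▸ hzp⟩
    · exact ⟨hq, hk' ▸ hzq⟩
    · exact ⟨hg𝒞 i hi, hgz i hi⟩
  refine ⟨f, if_pos rfl, by simp [f, hk.ne'], fun i hi => (hf i hi).1, fun i hi => ?_⟩
  exact cellAdj_of_dist_lt (hf i hi.le).2 (hf (i + 1) hi).2 (hstep i hi)

lemma exists_cellAdj_chain_of_convex {S : Set (EuclideanSpace ℝ (Fin 2))} {ℓ : ℝ}
    {𝒞 : Set (ℤ × ℤ)} (hS : Convex ℝ S) (hcov : S ⊆ ⋃ p ∈ 𝒞, gridCell ℓ p)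
    {x y : EuclideanSpace ℝ (Fin 2)} {p q : ℤ × ℤ} (hp : p ∈ 𝒞) (hxp : x ∈ gridCell ℓ p)
    (hxS : x ∈ S) (hq : q ∈ 𝒞) (hyq : y ∈ gridCell ℓ q) (hyS : y ∈ S)
    {k : ℕ} (hk : 0 < k) (hxy : dist x y < k * ℓ) :
    ∃ f : ℕ → ℤ × ℤ, f 0 = p ∧ f k = q ∧ (∀ i ≤ k, f i ∈ 𝒞) ∧
      ∀ i < k, cellAdj (f i) (f (i + 1)) := by
  have hk' : (0 : ℝ) < k := Nat.cast_pos.mpr hk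
  let z : ℕ → EuclideanSpace ℝ (Fin 2) := fun i => AffineMap.lineMap x y ((i : ℝ) / k)
  refine exists_cellAdj_chain hk z (fun i hi => ?_) (fun i _ => ?_) hp (by simpa [z]) hq
    (by simpa [z, hk'.ne'])
  · have hzS : z i ∈ S := hS.lineMap_mem hxS hyS
      ⟨by positivity, div_le_one_of_le₀ (by exact_mod_cast hi) hk'.le⟩
    simpa using hcov hzS
  · calc dist (z i) (z (i + 1)) = dist x y / k := by
          simp only [z, dist_lineMap_lineMap, Real.dist_eq]
          rw [show ((i : ℝ) / k - ((i + 1 : ℕ) : ℝ) / k) = -(1 / k) by push_cast; ring]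
          rw [abs_neg, abs_of_pos (by positivity)]
          ring
      _ < ℓ := by rwa [div_lt_iff₀' hk']

lemma exists_nat_gt_le_two_mul {t : ℝ} (ht : 1 ≤ t) : ∃ k : ℕ, t < k ∧ (k : ℝ) ≤ 2 * t :=
  ⟨⌊t⌋₊ + 1, by push_cast; exact Nat.lt_floor_add_one t,
    by push_cast; linarith [Nat.floor_le (zero_le_one.trans ht)]⟩

theorem stmt_3 (γ : ℝ) (hγ : 0 < γ) :
    ∃ c : ℝ, 0 < c ∧
      ∀ (S : Set (EuclideanSpace ℝ (Fin 2))) (ℓ : ℝ) (𝒞 : Set (ℤ × ℤ)),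
        Convex ℝ S → Bornology.IsBounded S → 0 < ℓ → ℓ ≤ Metric.diam S →
        S ⊆ ⋃ p ∈ 𝒞, gridCell ℓ p →
        (∀ p ∈ 𝒞, γ * ℓ ^ 2 ≤ (volume (gridCell ℓ p ∩ S)).toReal) →
        ∀ p ∈ 𝒞, ∀ q ∈ 𝒞, ∃ (k : ℕ) (f : ℕ → ℤ × ℤ),
          f 0 = p ∧ f k = q ∧ (∀ i ≤ k, f i ∈ 𝒞) ∧
          (∀ i < k, cellAdj (f i) (f (i + 1))) ∧
          (k : ℝ) ≤ c * Metric.diam S / ℓ := by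
  refine ⟨2, two_pos, fun S ℓ 𝒞 hS hSb hℓ hℓD hcov hvol p hp q hq => ?_⟩
  have hmeets : ∀ r ∈ 𝒞, (gridCell ℓ r ∩ S).Nonempty := fun r hr =>
    nonempty_of_measure_ne_zero (ENNReal.toReal_pos_iff.mp
      ((by positivity : 0 < γ * ℓ ^ 2).trans_le (hvol r hr))).1.ne'
  obtain ⟨x, hxp, hxS⟩ := hmeets p hp
  obtain ⟨y, hyq, hyS⟩ := hmeets q hq
  have hDℓ : 1 ≤ Metric.diam S / ℓ := (one_le_div hℓ).mpr hℓD
  obtain ⟨k, hDk, hkD⟩ := exists_nat_gt_le_two_mul hDℓ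
  have hk : 0 < k := by exact_mod_cast (zero_lt_one.trans_le hDℓ).trans hDk
  have hxy : dist x y < k * ℓ :=
    (Metric.dist_le_diam_of_mem hSb hxS hyS).trans_lt ((div_lt_iff₀ hℓ).mp hDk)
  obtain ⟨f, hf0, hfk, hf𝒞, hfadj⟩ :=
    exists_cellAdj_chain_of_convex hS hcov hp hxp hxS hq hyq hyS hk hxy
  exact ⟨k, f, hf0, hfk, hf𝒞, hfadj, by rwa [mul_div_assoc]⟩
end

section
/- Let F(z₁,…,z_n) count the number of points z_i ∈ ℝ² that are 'isolated', i.e., at Euclidean distance greater than R from every other point z_j (j ≠ i). Then changing the position of a single point z_k changes F by at most 7. -/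
/-!
A point that is isolated before the move but not after it is either the moved point `k`, or a
point `i ≠ k` whose only close neighbour after the move is the new position `c` of `k`. Points of
the second kind were isolated, so they are pairwise more than `R` apart, and all lie within `R`
of `c`. Two of them in the same sextant around `c` would be within `R` of each other (an angle of
at most `π / 3` at `c` makes the opposite side no longer than the longer of the two others), so
there are at most six of them. Swapping the roles of the two configurations gives the bound in
both directions.
-/

open scoped Classical
open Complex ComplexConjugate Finset
open scoped Real

lemma floor_sextant_lt_six (v : ℂ) : ⌊(π - v.arg) / (π / 3)⌋₊ < 6 := by
  rw [Nat.floor_lt' (by norm_num), div_lt_iff₀ (by positivity)]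
  linarith [neg_pi_lt_arg v]

noncomputable def sextant (v : ℂ) : Fin 6 :=
  ⟨⌊(π - v.arg) / (π / 3)⌋₊, floor_sextant_lt_six v⟩

lemma abs_arg_sub_le_of_sextant_eq {u v : ℂ} (h : sextant u = sextant v) :
    |u.arg - v.arg| ≤ π / 3 := by
  have hπ : 0 < π / 3 := by positivity
  set x := (π - u.arg) / (π / 3)
  set y := (π - v.arg) / (π / 3)
  have hx : 0 ≤ x := div_nonneg (by linarith [arg_le_pi u]) hπ.le
  have hy : 0 ≤ y := div_nonneg (by linarith [arg_le_pi v]) hπ.le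
  have hfloor : ⌊x⌋₊ = ⌊y⌋₊ := Fin.val_eq_of_eq h
  have hxy : |x - y| ≤ 1 := by
    have := Nat.floor_le hx; have := Nat.lt_floor_add_one x
    have := Nat.floor_le hy; have := Nat.lt_floor_add_one y
    rw [hfloor] at *
    exact abs_sub_le_iff.2 ⟨by linarith, by linarith⟩
  have hdiff : u.arg - v.arg = (y - x) * (π / 3) := by
    rw [sub_mul, div_mul_cancel₀ _ hπ.ne', div_mul_cancel₀ _ hπ.ne']
    ring
  rw [hdiff, abs_mul, abs_sub_comm, abs_of_pos hπ]
  simpa using mul_le_mul_of_nonneg_right hxy hπ.le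

lemma re_mul_conj_eq_norm_mul_norm_mul_cos (u v : ℂ) :
    (u * conj v).re = ‖u‖ * ‖v‖ * Real.cos (u.arg - v.arg) := by
  conv_lhs => rw [← norm_mul_exp_arg_mul_I u, ← norm_mul_exp_arg_mul_I v]
  rw [map_mul, ← exp_conj, map_mul, conj_ofReal, conj_ofReal, conj_I, mul_mul_mul_comm,
    ← exp_add, ← ofReal_mul]
  have : (u.arg : ℂ) * I + v.arg * -I = (u.arg - v.arg : ℝ) * I := by push_cast; ring
  rw [this, re_ofReal_mul, exp_ofReal_mul_I_re]

lemma norm_sub_le_of_abs_arg_sub_le {R : ℝ} {u v : ℂ} (hu : ‖u‖ ≤ R) (hv : ‖v‖ ≤ R)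
    (h : |u.arg - v.arg| ≤ π / 3) : ‖u - v‖ ≤ R := by
  have hcos : 1 / 2 ≤ Real.cos (u.arg - v.arg) := by
    rw [← Real.cos_abs, ← Real.cos_pi_div_three]
    exact Real.cos_le_cos_of_nonneg_of_le_pi (abs_nonneg _) (by linarith [Real.pi_pos]) h
  have hre : ‖u‖ * ‖v‖ / 2 ≤ (u * conj v).re := by
    rw [re_mul_conj_eq_norm_mul_norm_mul_cos]
    nlinarith [mul_nonneg (norm_nonneg u) (norm_nonneg v)]
  -- law of cosines: `‖u - v‖² ≤ ‖u‖² + ‖v‖² - ‖u‖ ‖v‖ ≤ max ‖u‖ ‖v‖ ^ 2`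
  have hsq : ‖u - v‖ ^ 2 ≤ R ^ 2 := by
    rw [← normSq_eq_norm_sq, normSq_sub, normSq_eq_norm_sq, normSq_eq_norm_sq]
    rcases le_total ‖u‖ ‖v‖ with huv | hvu
    · nlinarith [norm_nonneg u]
    · nlinarith [norm_nonneg v]
  exact le_of_sq_le_sq hsq ((norm_nonneg _).trans hu)

lemma card_le_six_of_pairwise_dist_gt {ι : Type*} (R : ℝ) (s : Finset ι) (p : ι → ℂ) (c : ℂ)
    (hsep : ∀ i ∈ s, ∀ j ∈ s, i ≠ j → R < dist (p i) (p j))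
    (hball : ∀ i ∈ s, dist (p i) c ≤ R) : #s ≤ 6 := by
  by_contra! hcard
  obtain ⟨i, hi, j, hj, hij, hsec⟩ :=
    exists_ne_map_eq_of_card_lt_of_maps_to (t := (univ : Finset (Fin 6))) (by simpa using hcard)
      fun i _ => mem_univ (sextant (p i - c))
  have hnorm : ∀ i ∈ s, ‖p i - c‖ ≤ R := fun i hi => dist_eq (p i) c ▸ hball i hi
  have hclose := norm_sub_le_of_abs_arg_sub_le (hnorm i hi) (hnorm j hj)
    (abs_arg_sub_le_of_sextant_eq hsec)
  rw [sub_sub_sub_cancel_right, ← dist_eq] at hclose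
  exact (hsep i hi j hj hij).not_ge hclose

noncomputable def isolatedPoints {ι X : Type*} [Fintype ι] [PseudoMetricSpace X] (R : ℝ)
    (z : ι → X) : Finset ι :=
  univ.filter fun i => ∀ j, j ≠ i → R < dist (z i) (z j)

section MovingOnePoint

variable {ι X : Type*} [Fintype ι] [PseudoMetricSpace X] (R : ℝ) (z w : ι → X) (k : ι)

lemma isolatedPoints_eq_filter [DecidablePred fun i => ∀ j, j ≠ i → R < dist (z i) (z j)] :
    isolatedPoints R z = univ.filter fun i => ∀ j, j ≠ i → R < dist (z i) (z j) := by
  unfold isolatedPoints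
  congr!

lemma isolatedPoints_subset_union_insert (h : ∀ i, i ≠ k → z i = w i) :
    isolatedPoints R z ⊆ isolatedPoints R w ∪
      insert k ((isolatedPoints R z).filter fun i => i ≠ k ∧ dist (z i) (w k) ≤ R) := by
  intro i hiz
  by_cases hiw : i ∈ isolatedPoints R w
  · exact mem_union_left _ hiw
  refine mem_union_right _ ?_
  by_cases hik : i = k
  · exact hik ▸ mem_insert_self _ _
  obtain ⟨j, hji, hij⟩ : ∃ j, j ≠ i ∧ dist (w i) (w j) ≤ R := by
    simpa [isolatedPoints] using hiw
  -- the only neighbour `i` can have gained is the moved point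
  obtain rfl : j = k := by
    by_contra hjk
    rw [← h i hik, ← h j hjk] at hij
    exact ((mem_filter.1 hiz).2 j hji).not_ge hij
  exact mem_insert_of_mem (mem_filter.2 ⟨hiz, hik, h i hik ▸ hij⟩)

end MovingOnePoint

lemma card_isolatedPoints_le_add_seven {ι : Type*} [Fintype ι] (R : ℝ)
    (z w : ι → EuclideanSpace ℝ (Fin 2)) (k : ι) (h : ∀ i, i ≠ k → z i = w i) :
    #(isolatedPoints R z) ≤ #(isolatedPoints R w) + 7 := by
  set T := (isolatedPoints R z).filter fun i => i ≠ k ∧ dist (z i) (w k) ≤ R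
  let e := Complex.orthonormalBasisOneI.repr.symm
  have hT : #T ≤ 6 := by
    refine card_le_six_of_pairwise_dist_gt R T (e ∘ z) (e (w k)) (fun i hi j _ hij => ?_)
      fun i hi => ?_
    · rw [Function.comp_apply, Function.comp_apply, LinearIsometryEquiv.dist_map]
      exact (mem_filter.1 (mem_filter.1 hi).1).2 j (Ne.symm hij)
    · rw [Function.comp_apply, LinearIsometryEquiv.dist_map]
      exact (mem_filter.1 hi).2.2
  calc #(isolatedPoints R z)
      ≤ #(isolatedPoints R w ∪ insert k T) :=
        card_le_card (isolatedPoints_subset_union_insert R z w k h)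
    _ ≤ #(isolatedPoints R w) + (#T + 1) :=
        (card_union_le _ _).trans (Nat.add_le_add_left (card_insert_le k T) _)
    _ ≤ #(isolatedPoints R w) + 7 := by omega

theorem stmt_9_general {n : ℕ} (R : ℝ)
    (z w : Fin n → EuclideanSpace ℝ (Fin 2)) (k : Fin n)
    (h : ∀ i, i ≠ k → z i = w i) :
    |((Finset.univ.filter (fun i : Fin n => ∀ j, j ≠ i → R < dist (z i) (z j))).card : ℝ) -
      ((Finset.univ.filter (fun i : Fin n => ∀ j, j ≠ i → R < dist (w i) (w j))).card : ℝ)|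
      ≤ 7 := by
  have hzw : (#(isolatedPoints R z) : ℝ) ≤ #(isolatedPoints R w) + 7 := by
    exact_mod_cast card_isolatedPoints_le_add_seven R z w k h
  have hwz : (#(isolatedPoints R w) : ℝ) ≤ #(isolatedPoints R z) + 7 := by
    exact_mod_cast card_isolatedPoints_le_add_seven R w z k fun i hi => (h i hi).symm
  rw [← isolatedPoints_eq_filter, ← isolatedPoints_eq_filter]
  exact abs_sub_le_iff.2 ⟨sub_le_iff_le_add'.2 hzw, sub_le_iff_le_add'.2 hwz⟩

/-- The number of isolated points (at distance `> R` from every other point) among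
`z 1, …, z n` in the Euclidean plane changes by at most 7 when a single point is moved. -/
theorem stmt_9 {n : ℕ} (R : ℝ) (hR : 0 < R)
    (z w : Fin n → EuclideanSpace ℝ (Fin 2)) (k : Fin n)
    (h : ∀ i, i ≠ k → z i = w i) :
    |((Finset.univ.filter (fun i : Fin n => ∀ j, j ≠ i → R < dist (z i) (z j))).card : ℝ) -
      ((Finset.univ.filter (fun i : Fin n => ∀ j, j ≠ i → R < dist (w i) (w j))).card : ℝ)|
      ≤ 7 :=
  stmt_9_general R z w k h
end

section
/- In the plane, if points p₁,…,p_k all lie within distance R of a point q and are pairwise at distance greater than R from each other, then k ≤ 6. -/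
/-!
Identify the plane with `ℂ` and measure arguments from `q`. The seven or more arguments lie in
`(-π, π]`, so two of them fall into the same sixth of that interval and the two points subtend an
angle less than `π / 3` at `q`. By the law of cosines their distance is then at most the larger
of their distances to `q`, hence at most `R`.
-/

open Real Complex

theorem exists_ne_abs_sub_lt_of_forall_mem_Ioc {ι : Type*} [Fintype ι] {n : ℕ}
    (hn : n < Fintype.card ι) {a δ : ℝ} (hδ : 0 < δ) {θ : ι → ℝ}
    (hθ : ∀ i, θ i ∈ Set.Ioc a (a + n * δ)) : ∃ i j, i ≠ j ∧ |θ i - θ j| < δ := by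
  set bucket : ι → ℤ := fun i => ⌊(a + n * δ - θ i) / δ⌋
  have hmaps : ∀ i ∈ Finset.univ, bucket i ∈ Finset.Ico (0 : ℤ) n := by
    intro i _
    obtain ⟨hai, hib⟩ := hθ i
    rw [Finset.mem_Ico, Int.floor_nonneg, Int.floor_lt, div_lt_iff₀ hδ]
    exact ⟨div_nonneg (by linarith) hδ.le, by push_cast; linarith⟩
  obtain ⟨i, -, j, -, hij, hbucket⟩ :=
    Finset.exists_ne_map_eq_of_card_lt_of_maps_to (by simpa using hn) hmaps
  refine ⟨i, j, hij, ?_⟩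
  have := Int.abs_sub_lt_one_of_floor_eq_floor hbucket
  rwa [← sub_div, abs_div, abs_of_pos hδ, div_lt_one hδ, abs_sub_comm,
    sub_sub_sub_cancel_left] at this

theorem Complex.sq_norm_sub_eq (x y : ℂ) :
    ‖x - y‖ ^ 2 = ‖x‖ ^ 2 + ‖y‖ ^ 2 - 2 * ‖x‖ * ‖y‖ * Real.cos (arg x - arg y) := by
  have hx := norm_mul_cos_arg x
  have hy := norm_mul_cos_arg y
  have hx' := norm_mul_sin_arg x
  have hy' := norm_mul_sin_arg y
  rw [Real.cos_sub, Complex.sq_norm, Complex.sq_norm, Complex.sq_norm, normSq_apply, normSq_apply,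
    normSq_apply, sub_re, sub_im]
  linear_combination 2 * ‖y‖ * Real.cos (arg y) * hx + 2 * x.re * hy
    + 2 * ‖y‖ * Real.sin (arg y) * hx' + 2 * x.im * hy'

theorem Complex.norm_sub_le_max_of_cos_arg_sub (x y : ℂ) (h : 1 / 2 ≤ Real.cos (arg x - arg y)) :
    ‖x - y‖ ≤ max ‖x‖ ‖y‖ := by
  have hx := le_max_left ‖x‖ ‖y‖
  have hy := le_max_right ‖x‖ ‖y‖
  have hxy := mul_nonneg (norm_nonneg x) (norm_nonneg y)
  rw [← pow_le_pow_iff_left₀ (norm_nonneg _) (hx.trans' (norm_nonneg x)) two_ne_zero,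
    sq_norm_sub_eq]
  -- `a² + b² - 2ab cos ≤ a² + b² - ab ≤ max a b ²`
  nlinarith [mul_nonneg (sub_nonneg.2 hx) (sub_nonneg.2 hy),
    mul_nonneg (norm_nonneg x) (sub_nonneg.2 hx), mul_nonneg (norm_nonneg y) (sub_nonneg.2 hy)]

theorem Complex.card_le_six_of_dist_le_of_pairwise_lt_dist {ι : Type*} [Fintype ι] {c : ℂ} {R : ℝ}
    {z : ι → ℂ} (hclose : ∀ i, dist (z i) c ≤ R) (hfar : Pairwise fun i j => R < dist (z i) (z j)) :
    Fintype.card ι ≤ 6 := by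
  by_contra! hcard
  have harg : ∀ i, arg (z i - c) ∈ Set.Ioc (-π) (-π + (6 : ℕ) * (π / 3)) := fun i =>
    ⟨neg_pi_lt_arg _, by linarith [arg_le_pi (z i - c)]⟩
  obtain ⟨i, j, hij, hangle⟩ := exists_ne_abs_sub_lt_of_forall_mem_Ioc hcard (by positivity) harg
  have hcos : 1 / 2 ≤ Real.cos (arg (z i - c) - arg (z j - c)) := by
    rw [← Real.cos_abs, ← cos_pi_div_three]
    exact cos_le_cos_of_nonneg_of_le_pi (abs_nonneg _) (by linarith [pi_pos]) hangle.le
  have hdist := norm_sub_le_max_of_cos_arg_sub _ _ hcos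
  rw [sub_sub_sub_cancel_right, ← dist_eq_norm, ← dist_eq_norm, ← dist_eq_norm] at hdist
  exact (hfar hij).not_ge (hdist.trans (max_le (hclose i) (hclose j)))

theorem stmt_10_general (R : ℝ) (k : ℕ) (q : EuclideanSpace ℝ (Fin 2))
    (p : Fin k → EuclideanSpace ℝ (Fin 2))
    (hclose : ∀ i, dist (p i) q ≤ R)
    (hfar : ∀ i j, i ≠ j → R < dist (p i) (p j)) :
    k ≤ 6 := by
  let e := Complex.orthonormalBasisOneI.repr.symm
  simpa using Complex.card_le_six_of_dist_le_of_pairwise_lt_dist (c := e q) (z := e ∘ p)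
    (fun i => by simpa using hclose i) (fun i j hij => by simpa using hfar i j hij)

/-- Packing lemma in the Euclidean plane: at most 6 points can lie in the closed disk of
radius `R` around `q` while being pairwise at distance more than `R` from each other. -/
theorem stmt_10 (R : ℝ) (hR : 0 < R) (k : ℕ) (q : EuclideanSpace ℝ (Fin 2))
    (p : Fin k → EuclideanSpace ℝ (Fin 2))
    (hclose : ∀ i, dist (p i) q ≤ R)
    (hfar : ∀ i j, i ≠ j → R < dist (p i) (p j)) :
    k ≤ 6 :=
  stmt_10_general R k q p hclose hfar
end
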